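/- arXiv:1912.09522 — 2 statements merged into one kernel-verified Lean document; each statement's English description precedes it below -/
import Mathlib

section
/- Let p₁ ∈ [0,1], let θ ≥ 0 be a threshold, and let μ > θ be the integrated intensity ∫_B λ₀(s) ds of a flagged blank interval B. Then the posterior probability that B contains no omission outliers, which equals (e^{−μ}) / (∑_{k=0}^∞ p₁^k · μ^k e^{−μ}/k!) = exp(−p₁·μ), is at most exp(−p₁·θ). In particular, the false discovery rate of the rule that flags B as containing omission outliers when ∫_B λ₀(s) ds > θ is bounded above by exp(−p₁·θ), when the normal point process is an inhomogeneous Poisson process with omission probability p₁. -/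
/-- **Omission-outlier FDR bound (Theorem 3), Poisson case.**
Let `p₁ ∈ [0,1]`, `θ ≥ 0` a threshold, and `μ > θ` the integrated intensity of a flagged blank
interval. Then the posterior probability that the interval contains no omission outliers,
`e^{-μ} / ∑ₖ p₁ᵏ μᵏ e^{-μ}/k!`, equals `exp (-p₁ μ)` and is at most `exp (-p₁ θ)`. -/
theorem omission_fdr_bound (p1 θ μ : ℝ) (hp0 : 0 ≤ p1) (hp1 : p1 ≤ 1) (hθ : 0 ≤ θ)
    (hμ : θ < μ) :
    Real.exp (-μ) / (∑' k : ℕ, p1 ^ k * (μ ^ k * Real.exp (-μ) / (Nat.factorial k)))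
        = Real.exp (-(p1 * μ)) ∧
      Real.exp (-(p1 * μ)) ≤ Real.exp (-(p1 * θ)) := by
  constructor
  · have h1 : (∑' k : ℕ, p1 ^ k * (μ ^ k * Real.exp (-μ) / (Nat.factorial k)))
        = Real.exp (-μ) * Real.exp (p1 * μ) := by
      have : ∀ k : ℕ, p1 ^ k * (μ ^ k * Real.exp (-μ) / (Nat.factorial k))
          = Real.exp (-μ) * ((p1 * μ) ^ k / (Nat.factorial k)) := by
        intro k; rw [mul_pow]; ring
      rw [tsum_congr this, tsum_mul_left, Real.exp_eq_exp_ℝ, NormedSpace.exp_eq_tsum_div]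
    rw [h1]
    rw [div_eq_iff (by positivity)]
    rw [← Real.exp_add]
    rw [← Real.exp_add]; ring_nf
  · apply Real.exp_le_exp.mpr
    nlinarith
end

section
/- Let ν be a probability measure on the positive reals (0, ∞) such that ∫ (1/λ) dν(λ) < ∞. Then the function h(s) = ∫ s/(λ − s) dν(λ) is strictly increasing on (−∞, 0). Consequently, the marginalized posterior p(Z = 1 | t) = 1 + ∫ s_c/(λ₁ − s_c) dν(λ₁) is a strictly increasing function of the commission outlier score s_c ∈ (−∞, 0). -/
open MeasureTheory

/-! For every `λ > 0` the integrand `s / (λ - s) = -1 + λ / (λ - s)` is strictly increasing in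
`s < λ` and, for `s ≤ 0`, takes values in `(-1, 0]`, so it is integrable against any finite
measure. Integrating a pointwise a.e. strict inequality against a nonzero measure keeps it
strict, since the nonnegative difference cannot vanish a.e. -/

section StrictIntegral

variable {α : Type*} [MeasurableSpace α] {μ : Measure α} [NeZero μ]

theorem integral_lt_integral_of_ae_lt {f g : α → ℝ} (hf : Integrable f μ) (hg : Integrable g μ)
    (hfg : ∀ᵐ x ∂μ, f x < g x) : ∫ x, f x ∂μ < ∫ x, g x ∂μ := by
  have hnonneg : 0 ≤ᵐ[μ] g - f := hfg.mono fun x hx => sub_nonneg.mpr hx.le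
  have hsupport : 0 < μ (Function.support (g - f)) := by
    refine pos_iff_ne_zero.mpr fun hzero => ?_
    have hvanish : ∀ᵐ x ∂μ, g x - f x = 0 := by
      simpa [ae_iff, Function.support] using hzero
    have : (ae μ).NeBot := ae_neBot.mpr (NeZero.ne μ)
    obtain ⟨x, hlt, heq⟩ := (hfg.and hvanish).exists
    linarith
  have hpos := (integral_pos_iff_support_of_nonneg_ae hnonneg (hg.sub hf)).mpr hsupport
  rw [integral_sub' hg hf] at hpos
  linarith

theorem strictMonoOn_integral_of_ae {β : Type*} [Preorder β] {S : Set β} {F : β → α → ℝ}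
    (hF : ∀ s ∈ S, Integrable (F s) μ) (hmono : ∀ᵐ x ∂μ, StrictMonoOn (fun s => F s x) S) :
    StrictMonoOn (fun s => ∫ x, F s x ∂μ) S := fun _ ha _ hb hab =>
  integral_lt_integral_of_ae_lt (hF _ ha) (hF _ hb) (hmono.mono fun _ hx => hx ha hb hab)

end StrictIntegral

theorem strictMonoOn_div_sub_self {lam : ℝ} (hlam : 0 < lam) :
    StrictMonoOn (fun s : ℝ => s / (lam - s)) (Set.Iio lam) := by
  intro s₁ hs₁ s₂ hs₂ h
  have h₁ : 0 < lam - s₁ := sub_pos.mpr hs₁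
  have h₂ : 0 < lam - s₂ := sub_pos.mpr hs₂
  rw [div_lt_div_iff₀ h₁ h₂]
  nlinarith

theorem abs_div_sub_self_le_one {lam s : ℝ} (hlam : 0 ≤ lam) (hs : s ≤ 0) :
    |s / (lam - s)| ≤ 1 := by
  have hle : |s| ≤ |lam - s| := by
    rw [abs_of_nonpos hs, abs_of_nonneg (by linarith)]
    linarith
  rw [abs_div]
  exact div_le_one_of_le₀ hle (abs_nonneg _)

theorem integrable_div_sub_self {ν : Measure ℝ} [IsFiniteMeasure ν] (hν : ∀ᵐ lam ∂ν, 0 ≤ lam)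
    {s : ℝ} (hs : s ≤ 0) : Integrable (fun lam : ℝ => s / (lam - s)) ν :=
  Integrable.of_bound (measurable_const.div (measurable_id.sub_const s)).aestronglyMeasurable 1
    (hν.mono fun _ hlam => abs_div_sub_self_le_one hlam hs)

theorem commission_posterior_strictMono_general (ν : Measure ℝ) [IsProbabilityMeasure ν]
    (hsupp : ν (Set.Ioi (0 : ℝ))ᶜ = 0) :
    StrictMonoOn (fun s : ℝ => ∫ lam, s / (lam - s) ∂ν) (Set.Iio 0) ∧
      StrictMonoOn (fun s : ℝ => 1 + ∫ lam, s / (lam - s) ∂ν) (Set.Iio 0) := by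
  have hpos : ∀ᵐ lam ∂ν, 0 < lam := mem_ae_iff.mpr hsupp
  have hmono : StrictMonoOn (fun s : ℝ => ∫ lam, s / (lam - s) ∂ν) (Set.Iio 0) :=
    strictMonoOn_integral_of_ae
      (fun _ hs => integrable_div_sub_self (hpos.mono fun _ h => h.le) (le_of_lt hs))
      (hpos.mono fun _ hlam => (strictMonoOn_div_sub_self hlam).mono (Set.Iio_subset_Iio hlam.le))
  exact ⟨hmono, fun _ ha _ hb hab => (add_lt_add_iff_left 1).mpr (hmono ha hb hab)⟩

/-- Let `ν` be a probability measure on the positive reals `(0, ∞)` with `∫ (1/λ) dν(λ) < ∞`.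
Then `h s = ∫ s / (λ - s) dν(λ)` is strictly increasing on `(-∞, 0)`; consequently the
marginalized posterior `1 + ∫ s / (λ - s) dν(λ)` is a strictly increasing function of the
commission outlier score `s ∈ (-∞, 0)`. -/
theorem commission_posterior_strictMono (ν : Measure ℝ) [IsProbabilityMeasure ν]
    (hsupp : ν (Set.Ioi (0 : ℝ))ᶜ = 0) (hint : Integrable (fun lam : ℝ => 1 / lam) ν) :
    StrictMonoOn (fun s : ℝ => ∫ lam, s / (lam - s) ∂ν) (Set.Iio 0) ∧
      StrictMonoOn (fun s : ℝ => 1 + ∫ lam, s / (lam - s) ∂ν) (Set.Iio 0) :=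
  commission_posterior_strictMono_general ν hsupp
end
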